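/- Let c₀, c₁ ∈ ℂ with |c₀|²+|c₁|² = 1, 0 < τ ≤ 1, and 0 < ν ≤ 1. With notation as in the single-rail qubit loss channel (basis e₀, e₁ of ℂ², Kraus operators A₀ = e₀e₀† + τ e₁e₁†, A₁ = √(1−τ²) e₀e₁†), define the attenuation N = e₀e₀† + ν e₁e₁† and gain G = e₀e₀† + g e₁e₁† with g = 1/(ντ), and let v = c₀e₀ + c₁e₁ and ρ = vv†. Then G(A₀ (NρN) A₀† + A₁ (NρN) A₁†)G† = vv† + ν²(1−τ²)|c₁|² e₀e₀†, i.e. the full NLS channel output is the input projector vv† plus a vacuum term suppressed by ν². -/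

import Mathlib

set_option maxHeartbeats 1000000


/-- Outer product `|v⟩⟨w|` as a `2×2` complex matrix. -/
def ketbra (v w : Fin 2 → ℂ) : Matrix (Fin 2) (Fin 2) ℂ :=
  Matrix.of fun i j => v i * star (w j)

/-- Single-mode noiseless loss suppression (Mičuda et al.): pre-attenuation by
`ν`, pure loss of transmittance `τ`, and noiseless amplification with gain
`g = 1/(ντ)` return the unnormalized state `vv† + ν²(1−τ²)|c₁|² |0⟩⟨0|`. -/
theorem stmt16 (c₀ c₁ : ℂ) (hnorm : ‖c₀‖ ^ 2 + ‖c₁‖ ^ 2 = 1)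
    (τ ν g : ℝ) (hτ0 : 0 < τ) (hτ1 : τ ≤ 1) (hν0 : 0 < ν) (hν1 : ν ≤ 1)
    (hg : g = 1 / (ν * τ))
    (e₀ e₁ : Fin 2 → ℂ) (he₀ : e₀ = ![1, 0]) (he₁ : e₁ = ![0, 1])
    (v : Fin 2 → ℂ) (hv : v = c₀ • e₀ + c₁ • e₁)
    (ρ A₀ A₁ N G : Matrix (Fin 2) (Fin 2) ℂ)
    (hρ : ρ = ketbra v v)
    (hA₀ : A₀ = ketbra e₀ e₀ + (τ : ℂ) • ketbra e₁ e₁)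
    (hA₁ : A₁ = (Real.sqrt (1 - τ ^ 2) : ℂ) • ketbra e₀ e₁)
    (hN : N = ketbra e₀ e₀ + (ν : ℂ) • ketbra e₁ e₁)
    (hG : G = ketbra e₀ e₀ + (g : ℂ) • ketbra e₁ e₁) :
    G * (A₀ * (N * ρ * N.conjTranspose) * A₀.conjTranspose
          + A₁ * (N * ρ * N.conjTranspose) * A₁.conjTranspose) * G.conjTranspose
      = ketbra v v + ((ν ^ 2 * (1 - τ ^ 2) * ‖c₁‖ ^ 2 : ℝ) : ℂ) • ketbra e₀ e₀ := by
  have hτne : (τ : ℂ) ≠ 0 := by exact_mod_cast hτ0.ne'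
  have hνne : (ν : ℂ) ≠ 0 := by exact_mod_cast hν0.ne'
  have hgC : (g : ℂ) = 1 / (ν * τ) := by rw [hg]; push_cast; ring
  have hgν : (g : ℂ) * ν * τ = 1 := by
    rw [hgC]; field_simp
  have hs : ((Real.sqrt (1 - τ ^ 2) : ℂ)) * ((Real.sqrt (1 - τ ^ 2)) : ℂ)
      = ((1 - τ ^ 2 : ℝ) : ℂ) := by
    rw [← Complex.ofReal_mul, Real.mul_self_sqrt]
    nlinarith
  have hc1 : c₁ * (starRingEnd ℂ) c₁ = ((‖c₁‖ : ℝ) : ℂ) ^ 2 := by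
    rw [Complex.mul_conj']
  subst hρ hA₀ hA₁ hN hG hv he₀ he₁ hg
  ext i j
  fin_cases i <;> fin_cases j <;>
    simp [ketbra, Matrix.mul_apply, Matrix.conjTranspose_apply, Fin.sum_univ_two,
      Matrix.add_apply, Matrix.smul_apply, smul_eq_mul, Pi.add_apply, Pi.smul_apply] <;>
    push_cast at hs hc1 ⊢ <;>
    try (field_simp) <;>
    try (ring_nf)
  all_goals (linear_combination ((ν:ℂ)^2 * ((‖c₁‖:ℝ):ℂ)^2) * hs + ((ν:ℂ)^2 * (Real.sqrt (1-τ^2):ℂ) * (Real.sqrt (1-τ^2):ℂ)) * hc1 + ((1-(ν:ℂ)^2) * ((‖c₁‖:ℝ):ℂ)^2) * hs + ((1-(ν:ℂ)^2) * (Real.sqrt (1-τ^2):ℂ) * (Real.sqrt (1-τ^2):ℂ)) * hc1)
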